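/- arXiv:1304.0937 — 2 statements merged into one kernel-verified Lean document; each statement's English description precedes it below -/
import Mathlib

section
/- Let ξ = exp(2πi/5), let N be the 4×4 rational matrix with rows (1,0,0,0), (-2/5, 2/5, 1/5, -1/5), (-21/5, 1/5, 3/5, -8/5), (1,-1,0,0), let M = [[0,1,0,0],[0,0,1,0],[-1,-1,-1,-1],[1,0,0,0]], and let v = (x, ξx, ξ²x, ξ⁴x) for any complex number x. Then for every i = 0,1,2,3,4, the fourth (last) component of N·M^i·v equals ξ^i·(1-ξ)·x. -/
open Complex

/-- With `ξ = e^{2πi/5}`, the connection matrix `N`, the Gepner monodromy `M`, and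
`v = (x, ξx, ξ²x, ξ⁴x)`, the last component of `N·Mⁱ·v` is `ξⁱ(1-ξ)x` for `i = 0,…,4`. -/
theorem gepner_central_charges (x : ℂ) :
    let ξ : ℂ := Complex.exp (2 * Real.pi * I / 5)
    let N : Matrix (Fin 4) (Fin 4) ℂ :=
      !![1, 0, 0, 0;
         -2/5, 2/5, 1/5, -1/5;
         -21/5, 1/5, 3/5, -8/5;
         1, -1, 0, 0]
    let M : Matrix (Fin 4) (Fin 4) ℂ :=
      !![0, 1, 0, 0;
         0, 0, 1, 0;
         -1, -1, -1, -1;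
         1, 0, 0, 0]
    let v : Fin 4 → ℂ := ![x, ξ * x, ξ ^ 2 * x, ξ ^ 4 * x]
    ∀ i : ℕ, i ≤ 4 → (N * M ^ i).mulVec v 3 = ξ ^ i * (1 - ξ) * x := by
  intro ξ N M v i hi
  have hprim : IsPrimitiveRoot ξ 5 := by
    have := Complex.isPrimitiveRoot_exp 5 (by norm_num)
    simpa [ξ] using this
  have h5 : ξ ^ 5 = 1 := hprim.pow_eq_one
  have hne : ξ ≠ 1 := hprim.ne_one (by norm_num)
  have hsum : ξ ^ 4 + ξ ^ 3 + ξ ^ 2 + ξ + 1 = 0 := by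
    have h : (ξ - 1) * (ξ ^ 4 + ξ ^ 3 + ξ ^ 2 + ξ + 1) = 0 := by
      linear_combination h5
    rcases mul_eq_zero.mp h with h' | h'
    · exact absurd (sub_eq_zero.mp h') hne
    · exact h'
  interval_cases i <;>
    simp [pow_succ, Matrix.mulVec, dotProduct, Matrix.mul_apply,
      Fin.sum_univ_four, N, M, v] <;>
    first
      | linear_combination
      | linear_combination x * hsum
      | linear_combination (-x) * hsum
      | linear_combination ((ξ - 1) * x) * hsum
end

section
/- In the formal power series ring ℚ(p)[[z]] (coefficients rational functions in p), the quantum dilogarithm E(p,z) = Σ_{m≥0} (-p)^{m²} z^m / Π_{k=0}^{m-1} (p^{2m} - p^{2k}) satisfies E(p,z) = Π_{i≥0} (1 - p^{2i+1} z)^{-1}, where the infinite product is interpreted as a formal power series in z and p (each z^m-coefficient being a well-defined power series in p). -/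
open PowerSeries

/-- The quantum dilogarithm `E(p,z) = Σ_m (-p)^{m²} zᵐ / Π_{k<m} (p^{2m} - p^{2k})`
as a power series in `z` with Laurent-series coefficients in `p`. -/
noncomputable def quantumDilog : PowerSeries (LaurentSeries ℚ) :=
  let p : LaurentSeries ℚ := ((PowerSeries.X : PowerSeries ℚ) : LaurentSeries ℚ)
  PowerSeries.mk fun m =>
    (-p) ^ (m ^ 2) / ∏ k ∈ Finset.range m, (p ^ (2 * m) - p ^ (2 * k))

namespace QDProof

open Finset

noncomputable section

abbrev K := LaurentSeries ℚ

def p : K := ((PowerSeries.X : PowerSeries ℚ) : LaurentSeries ℚ)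

local notation "v" => (Valued.v : Valuation K (WithZero (Multiplicative ℤ)))

lemma vp_pow (n : ℕ) : v (p ^ n) =
    ((Multiplicative.ofAdd (-(n : ℤ)) : Multiplicative ℤ) : WithZero (Multiplicative ℤ)) := by
  simpa [p, WithZero.exp] using LaurentSeries.valuation_X_pow (K := ℚ) n

lemma vp_pow_lt_one {n : ℕ} (hn : 1 ≤ n) : v (p ^ n) < 1 := by
  rw [vp_pow, ← WithZero.coe_one, WithZero.coe_lt_coe, ← ofAdd_zero, Multiplicative.ofAdd_lt]
  omega

lemma hp_ne : p ≠ 0 := by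
  intro h
  have := vp_pow 1
  rw [h] at this
  simp at this

lemma v_one_sub {n : ℕ} (hn : 1 ≤ n) : v (1 - p ^ n) = 1 :=
  Valuation.map_one_sub_of_lt _ (vp_pow_lt_one hn)

def D (m : ℕ) : K := ∏ j ∈ range m, (1 - p ^ (2 * (j + 1)))

lemma vD (m : ℕ) : v (D m) = 1 := by
  rw [D, map_prod]
  exact Finset.prod_eq_one fun j _ => v_one_sub (by omega)

lemma hD_ne (m : ℕ) : D m ≠ 0 := by
  intro h
  have := vD m
  rw [h] at this
  simp at this

def a (m : ℕ) : K := p ^ m / D m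

lemma va (m : ℕ) : v (a m) =
    ((Multiplicative.ofAdd (-(m : ℤ)) : Multiplicative ℤ) : WithZero (Multiplicative ℤ)) := by
  rw [a, map_div₀, vD, vp_pow, div_one]

lemma a_zero : a 0 = 1 := by simp [a, D]

lemma a_rec (m : ℕ) : a (m + 1) * (1 - p ^ (2 * (m + 1))) = p * a m := by
  have hc : (1 - p ^ (2 * (m + 1))) ≠ 0 := by
    intro h
    have := v_one_sub (n := 2 * (m + 1)) (by omega)
    rw [h] at this; simp at this
  rw [a, a, D, Finset.prod_range_succ, ← D, div_mul_eq_div_div, div_mul_cancel₀ _ hc,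
    pow_succ]
  ring

lemma prod_eq (m : ℕ) :
    ∏ k ∈ range m, (p ^ (2 * m) - p ^ (2 * k)) = p ^ (m * (m - 1)) * ((-1) ^ m * D m) := by
  calc ∏ k ∈ range m, (p ^ (2 * m) - p ^ (2 * k))
      = ∏ k ∈ range m, p ^ (2 * k) * (p ^ (2 * (m - k)) - 1) := by
        refine prod_congr rfl fun k hk => ?_
        rw [mul_sub, mul_one, ← pow_add]
        congr 2
        have := mem_range.mp hk; omega
    _ = (∏ k ∈ range m, p ^ (2 * k)) * ∏ k ∈ range m, (p ^ (2 * (m - k)) - 1) :=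
        prod_mul_distrib
    _ = p ^ (m * (m - 1)) * ∏ k ∈ range m, (p ^ (2 * (k + 1)) - 1) := by
        congr 1
        · rw [Finset.prod_pow_eq_pow_sum]
          congr 1
          have h := Finset.sum_range_id_mul_two m
          have : ∑ k ∈ range m, 2 * k = (∑ k ∈ range m, k) * 2 := by
            rw [Finset.sum_mul]; exact Finset.sum_congr rfl fun k _ => by ring
          omega
        · rw [← Finset.prod_range_reflect]
          refine prod_congr rfl fun k hk => ?_
          congr 3
          have := mem_range.mp hk; omega
    _ = p ^ (m * (m - 1)) * ((-1) ^ m * D m) := by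
        congr 1
        calc ∏ k ∈ range m, (p ^ (2 * (k + 1)) - 1)
            = ∏ k ∈ range m, (-1) * (1 - p ^ (2 * (k + 1))) :=
              prod_congr rfl fun _ _ => by ring
          _ = (-1) ^ m * D m := by
              rw [prod_mul_distrib, prod_const, card_range, D]

lemma quantumDilog_eq : quantumDilog = PowerSeries.mk a := by
  have h0 : quantumDilog = PowerSeries.mk
      (fun m => (-p) ^ (m ^ 2) / ∏ k ∈ range m, (p ^ (2 * m) - p ^ (2 * k))) := rfl
  rw [h0]
  refine PowerSeries.ext fun m => ?_
  rw [coeff_mk, coeff_mk]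
  rw [prod_eq, a]
  have hsign : (-p) ^ (m ^ 2) = (-1 : K) ^ m * p ^ (m ^ 2) := by
    rw [show (-p) = (-1 : K) * p from (neg_one_mul p).symm, mul_pow]
    congr 1
    rcases Nat.even_or_odd m with h | h
    · exact ((h.pow_of_ne_zero two_ne_zero).neg_one_pow (α := K)).trans
        (h.neg_one_pow (α := K)).symm
    · exact ((h.pow (n := 2)).neg_one_pow (α := K)).trans (h.neg_one_pow (α := K)).symm
  have hms : m ^ 2 = m * (m - 1) + m := by
    cases m with
    | zero => rfl
    | succ n => simp [pow_two, Nat.succ_sub_one]; ring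
  rw [hsign, hms, pow_add]
  have h1 : p ^ (m * (m - 1)) ≠ 0 := pow_ne_zero _ hp_ne
  have h2 : ((-1 : K)) ^ m ≠ 0 := pow_ne_zero _ (by norm_num)
  rw [div_eq_div_iff (mul_ne_zero h1 (mul_ne_zero h2 (hD_ne m))) (hD_ne m)]
  ring

/-! ### The geometric-series factors -/

def g (i : ℕ) : PowerSeries K := PowerSeries.mk fun n => (p ^ (2 * i + 1)) ^ n

lemma coeff_mul_CX (f : PowerSeries K) (c : K) (m : ℕ) :
    (coeff (m + 1)) (f * (C c * X)) = c * coeff m f := by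
  rw [show f * (C c * X) = f * X * C c by ring, coeff_mul_C, coeff_succ_mul_X, mul_comm]

lemma coeff_zero_mul_CX (f : PowerSeries K) (c : K) :
    (coeff 0) (f * (C c * X)) = 0 := by
  rw [show f * (C c * X) = f * X * C c by ring, coeff_mul_C, coeff_zero_mul_X, zero_mul]

lemma geom_mul (c : K) : (PowerSeries.mk fun n => c ^ n) * (1 - C c * X) = 1 := by
  refine PowerSeries.ext fun n => ?_
  rw [mul_sub, mul_one, map_sub]
  cases n with
  | zero => simp [coeff_zero_mul_CX]
  | succ n =>
    rw [coeff_mul_CX, coeff_mk, coeff_mk, pow_succ, PowerSeries.coeff_one]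
    simp [mul_comm]

lemma inv_one_sub_CX (c : K) :
    (1 - C c * X)⁻¹ = PowerSeries.mk fun n => c ^ n := by
  rw [eq_comm, PowerSeries.eq_inv_iff_mul_eq_one]
  · exact geom_mul c
  · simp

lemma funEq (N : ℕ) :
    (PowerSeries.mk a) * ∏ i ∈ range N, (1 - C (p ^ (2 * i + 1)) * X) =
      PowerSeries.mk fun m => p ^ (2 * N * m) * a m := by
  induction N with
  | zero => simp
  | succ N ih =>
    rw [prod_range_succ, ← mul_assoc, ih]
    refine PowerSeries.ext fun m => ?_
    rw [mul_sub, mul_one, map_sub]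
    cases m with
    | zero => simp [coeff_zero_mul_CX, coeff_mk]
    | succ m =>
      rw [coeff_mul_CX, coeff_mk, coeff_mk, coeff_mk]
      have key : a (m + 1) - p * a m = p ^ (2 * (m + 1)) * a (m + 1) := by
        linear_combination a_rec m
      linear_combination (p ^ (2 * N * (m + 1))) * key

lemma R_mul_G (N : ℕ) :
    (∏ i ∈ range N, g i) * ∏ i ∈ range N, (1 - C (p ^ (2 * i + 1)) * X) = 1 := by
  rw [← prod_mul_distrib]
  exact prod_eq_one fun i _ => geom_mul _

lemma E_eq (N : ℕ) :
    PowerSeries.mk a =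
      (PowerSeries.mk fun m => p ^ (2 * N * m) * a m) * ∏ i ∈ range N, g i := by
  calc PowerSeries.mk a
      = PowerSeries.mk a * ((∏ i ∈ range N, g i) *
          ∏ i ∈ range N, (1 - C (p ^ (2 * i + 1)) * X)) := by rw [R_mul_G, mul_one]
    _ = (PowerSeries.mk a * ∏ i ∈ range N, (1 - C (p ^ (2 * i + 1)) * X)) *
          ∏ i ∈ range N, g i := by ring
    _ = _ := by rw [funEq]

/-! ### Valuation bounds -/

def Int1 (f : PowerSeries K) : Prop := ∀ n, v ((coeff n) f) ≤ 1

def Tail (N : ℕ) (f : PowerSeries K) : Prop :=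
  ∀ n, 1 ≤ n → v ((coeff n) f) ≤
    ((Multiplicative.ofAdd (-(2 * (N : ℤ) + 1)) : Multiplicative ℤ) : WithZero (Multiplicative ℤ))

lemma Int1.mul {f h : PowerSeries K} (hf : Int1 f) (hh : Int1 h) : Int1 (f * h) := by
  intro n
  rw [PowerSeries.coeff_mul]
  refine Valuation.map_sum_le _ fun x _ => ?_
  rw [map_mul]
  exact mul_le_one' (hf _) (hh _)

lemma Int1.one : Int1 (1 : PowerSeries K) := by
  intro n
  rw [PowerSeries.coeff_one]
  split <;> simp

lemma TailInt.mul {N : ℕ} {f h : PowerSeries K}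
    (hf : Int1 f ∧ Tail N f) (hh : Int1 h ∧ Tail N h) :
    Int1 (f * h) ∧ Tail N (f * h) := by
  refine ⟨hf.1.mul hh.1, fun n hn => ?_⟩
  rw [PowerSeries.coeff_mul]
  refine Valuation.map_sum_le _ fun x hx => ?_
  rw [map_mul]
  have hxn : x.1 + x.2 = n := Finset.HasAntidiagonal.mem_antidiagonal.mp hx
  rcases Nat.eq_zero_or_pos x.1 with h1 | h1
  · have h2 : 1 ≤ x.2 := by omega
    calc v ((coeff x.1) f) * v ((coeff x.2) h) ≤ 1 * _ :=
          mul_le_mul' (hf.1 _) (hh.2 _ h2)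
      _ = _ := one_mul _
  · calc v ((coeff x.1) f) * v ((coeff x.2) h) ≤ _ * 1 :=
          mul_le_mul' (hf.2 _ h1) (hh.1 _)
      _ = _ := mul_one _

lemma TailInt.one {N : ℕ} : Int1 (1 : PowerSeries K) ∧ Tail N 1 := by
  refine ⟨Int1.one, fun n hn => ?_⟩
  rw [PowerSeries.coeff_one, if_neg (by omega)]
  simp

lemma TailInt.ofG {N i : ℕ} (hi : N ≤ i) : Int1 (g i) ∧ Tail N (g i) := by
  constructor
  · intro n
    rw [g, coeff_mk, ← pow_mul, vp_pow, ← WithZero.coe_one, WithZero.coe_le_coe,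
      ← ofAdd_zero, Multiplicative.ofAdd_le]
    omega
  · intro n hn
    rw [g, coeff_mk, ← pow_mul, vp_pow, WithZero.coe_le_coe, Multiplicative.ofAdd_le]
    have : 2 * N + 1 ≤ (2 * i + 1) * n := by nlinarith
    omega

lemma TailInt.prod {N : ℕ} {t : Finset ℕ} (ht : ∀ i ∈ t, N ≤ i) :
    Int1 (∏ i ∈ t, g i) ∧ Tail N (∏ i ∈ t, g i) := by
  refine Finset.prod_induction _ (fun f => Int1 f ∧ Tail N f)
    (fun f h hf hh => TailInt.mul hf hh) TailInt.one (fun i hi => TailInt.ofG (ht i hi))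

lemma constantCoeff_g (i : ℕ) : (coeff 0) (g i) = 1 := by
  rw [g, coeff_mk, pow_zero]

/-! ### The main estimate -/

lemma main_est (N m : ℕ) (s : Finset ℕ) (hs : range N ⊆ s) :
    v ((coeff m) ((∏ i ∈ s, g i) - PowerSeries.mk a)) ≤
      ((Multiplicative.ofAdd (-(2 * (N : ℤ) + 1)) : Multiplicative ℤ) :
        WithZero (Multiplicative ℤ)) := by
  have hsplit : (∏ i ∈ s, g i) =
      (∏ i ∈ s \ range N, g i) * ∏ i ∈ range N, g i := (Finset.prod_sdiff hs).symm
  set Q := ∏ i ∈ s \ range N, g i with hQ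
  set R := ∏ i ∈ range N, g i with hR
  set EN := PowerSeries.mk fun m => p ^ (2 * N * m) * a m with hEN
  have hQt : Int1 Q ∧ Tail N Q := TailInt.prod fun i hi => by
    have := Finset.mem_sdiff.mp hi
    have := Finset.mem_range.not.mp this.2
    omega
  have hRt : Int1 R := (TailInt.prod (N := 0) fun i _ => Nat.zero_le i).1
  have hdiff : (∏ i ∈ s, g i) - PowerSeries.mk a = (Q - EN) * R := by
    rw [hsplit, E_eq N, ← hEN, ← hR, sub_mul]
  rw [hdiff, PowerSeries.coeff_mul]
  refine Valuation.map_sum_le _ fun x hx => ?_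
  rw [map_mul]
  have hQ0 : (coeff 0) Q = 1 := by
    rw [hQ, PowerSeries.coeff_zero_eq_constantCoeff, map_prod]
    refine Finset.prod_eq_one fun i _ => ?_
    rw [← PowerSeries.coeff_zero_eq_constantCoeff]
    exact constantCoeff_g i
  have hEN0 : (coeff 0) EN = 1 := by
    rw [hEN, coeff_mk, a_zero, Nat.mul_zero, pow_zero, one_mul]
  rcases Nat.eq_zero_or_pos x.1 with h1 | h1
  · have hz : (coeff x.1) (Q - EN) = 0 := by
      rw [h1, map_sub, hQ0, hEN0, sub_self]
    rw [hz, map_zero, zero_mul]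
    exact zero_le'
  · have hQb : v ((coeff x.1) (Q - EN)) ≤
        ((Multiplicative.ofAdd (-(2 * (N : ℤ) + 1)) : Multiplicative ℤ) :
          WithZero (Multiplicative ℤ)) := by
      rw [map_sub]
      refine le_trans (Valuation.map_sub _ _ _) (max_le (hQt.2 _ h1) ?_)
      rw [hEN, coeff_mk, map_mul, vp_pow, va, ← WithZero.coe_mul, WithZero.coe_le_coe,
        ← ofAdd_add, Multiplicative.ofAdd_le]
      have h1' : (1 : ℤ) ≤ (x.1 : ℤ) := by exact_mod_cast h1
      push_cast
      nlinarith
    calc v ((coeff x.1) (Q - EN)) * v ((coeff x.2) R) ≤ _ * 1 :=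
          mul_le_mul' hQb (hRt _)
      _ = _ := mul_one _

lemma tendsto_coeff (m : ℕ) :
    Filter.Tendsto (fun s : Finset ℕ => (coeff m) (∏ i ∈ s, g i)) Filter.atTop
      (nhds (a m)) := by
  rw [Filter.tendsto_def]
  intro U hU
  obtain ⟨γ0, hγ0⟩ := Valued.mem_nhds.mp hU
  obtain ⟨γ, hγdef⟩ : ∃ γ, γ = MonoidWithZeroHom.ValueGroup₀.embedding γ0.1 := ⟨_, rfl⟩
  have hγ : {y | v (y - a m) < γ} ⊆ U := fun y hy => hγ0 (by
    simp only [Set.mem_setOf_eq] at hy ⊢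
    rw [Valuation.restrict_lt_iff_lt_embedding, ← hγdef]
    exact hy)
  obtain ⟨g0, hg0⟩ := WithZero.ne_zero_iff_exists.mp
    (hγdef ▸ MonoidWithZeroHom.ValueGroup₀.embedding_unit_ne_zero γ0)
  set N : ℕ := (Multiplicative.toAdd g0).natAbs with hN
  have hlt : ((Multiplicative.ofAdd (-(2 * (N : ℤ) + 1)) : Multiplicative ℤ) :
      WithZero (Multiplicative ℤ)) < γ := by
    rw [← hg0, WithZero.coe_lt_coe, ← ofAdd_toAdd g0, Multiplicative.ofAdd_lt,
      hN]
    omega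
  filter_upwards [Filter.eventually_ge_atTop (range N)] with s hs
  refine hγ ?_
  have h1 : (coeff m) (∏ i ∈ s, g i) - a m =
      (coeff m) ((∏ i ∈ s, g i) - PowerSeries.mk a) := by
    rw [map_sub, coeff_mk]
  simp only [Set.mem_setOf_eq]
  rw [h1]
  exact lt_of_le_of_lt (main_est N m s hs) hlt

lemma hasProd_g :
    @HasProd (PowerSeries K) ℕ _ Pi.topologicalSpace g (PowerSeries.mk a) (SummationFilter.unconditional ℕ) := by
  show Filter.Tendsto (fun s : Finset ℕ => ∏ i ∈ s, g i) Filter.atTop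
    (@nhds _ Pi.topologicalSpace (PowerSeries.mk a))
  refine tendsto_pi_nhds.mpr fun d => ?_
  obtain ⟨m, rfl⟩ : ∃ m, d = Finsupp.single () m := ⟨d (), Finsupp.unique_single d⟩
  have h2 : (coeff m) (PowerSeries.mk a) = a m := coeff_mk m a
  have h3 := tendsto_coeff m
  rw [← h2] at h3
  exact h3

end
end QDProof

/-- The product formula `E(p,z) = Π_{i≥0} (1 - p^{2i+1} z)⁻¹`, the infinite product being
interpreted coefficientwise (each `zᵐ`-coefficient converging `p`-adically). -/
theorem quantumDilog_product_formula :
    letI : TopologicalSpace (PowerSeries (LaurentSeries ℚ)) := Pi.topologicalSpace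
    quantumDilog =
      ∏' i : ℕ,
        (1 - PowerSeries.C
            (((PowerSeries.X : PowerSeries ℚ) : LaurentSeries ℚ) ^ (2 * i + 1)) *
          (PowerSeries.X : PowerSeries (LaurentSeries ℚ)))⁻¹ := by
  letI : TopologicalSpace (PowerSeries (LaurentSeries ℚ)) := Pi.topologicalSpace
  haveI : T2Space (PowerSeries (LaurentSeries ℚ)) := Pi.t2Space
  rw [QDProof.quantumDilog_eq]
  have hfun : (fun i : ℕ =>
      (1 - PowerSeries.C
          (((PowerSeries.X : PowerSeries ℚ) : LaurentSeries ℚ) ^ (2 * i + 1)) *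
        (PowerSeries.X : PowerSeries (LaurentSeries ℚ)))⁻¹) = QDProof.g :=
    funext fun i => QDProof.inv_one_sub_CX _
  rw [hfun]
  exact (QDProof.hasProd_g.tprod_eq).symm
end
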